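/- Let I be a finite set, m ∈ ℕ, and reals ε, ϵ, δ with 0 < ε < 1/2, 0 < ϵ ≤ ε, and 0 < δ ≤ ε^m/2. Suppose C ⊆ 2^I satisfies: for every f ∈ F^I with |dom f| ≤ m, | |(C)^f|·2^{−|I|} − (1 − ε)^{m⁰_f}·ε^{m¹_f} | < δ. Let k⁰, k₀ ∈ ℕ with k⁰ + k₀ ≤ m, let f ∈ F^I with |dom f| ≤ k⁰, and let m' be a distribution on 2^I with ŵ(m'_{(C)^f}) ≥ ϵ. Then there exists f̃ ∈ F^I extending f with |dom f̃ \ dom f| ≤ k₀ − s̄(k₀) such that for every g ∈ F^I extending f̃ with |dom g \ dom f̃| ≤ s̄(k₀), one has ŵ(m'_{(C)^g}) ≥ ŵ(m'_{(C)^f})·(1 − ϵ). -/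

import Mathlib

/-!
Suppose no `f̃` works. Then every admissible `f̃` has an extension `g` by at most `s̄ = s̄(k₀)`
points with `ŵ(m'_{(C)^g}) < (1 - ϵ) ŵ(m'_{(C)^f̃})`. The sets `(C)^{g'}`, for the `g'` with
`dom g' = dom g` extending `f̃`, partition `(C)^f̃`, so `ŵ(m'_{(C)^f̃})` is their size-weighted
average; pseudorandomness of `C` gives `(C)^g` at least a fraction `ε^s̄ / 4` of `(C)^f̃`, hence
some `g'` has `ŵ(m'_{(C)^{g'}}) > (1 + ϵ ε^s̄ / 4) ŵ(m'_{(C)^f̃})`. Repeating this `T` times with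
`T s̄ ≤ k₀` and `T ϵ² ε^s̄ > 4`, which the definition of `s̄` allows, drives `ŵ` above `1`.
-/

open Set Pointwise

/-- `(C)^f` for a partial two-valued function `f ∈ F^I`, represented by its domain `D`
together with a value function `v` (where `v s = true` codes `f s = 1`):
the intersection over `s ∈ D` of `C + s` when `f s = 0` and of `(C + s)ᶜ` when
`f s = 1`.  For `D = ∅` this is all of `2^I`. -/
def csec {ι : Type} (C D : Set (ι → ZMod 2)) (v : (ι → ZMod 2) → Bool) :
    Set (ι → ZMod 2) :=
  ⋂ s ∈ D, if v s = true then (C + {s})ᶜ else C + {s}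

/-- `m⁰_f`, the number of points of the domain where `f` takes the value `0`. -/
noncomputable def m0 {ι : Type} (D : Set (ι → ZMod 2)) (v : (ι → ZMod 2) → Bool) : ℕ :=
  (D ∩ {s | v s = false}).ncard

/-- `m¹_f`, the number of points of the domain where `f` takes the value `1`. -/
noncomputable def m1 {ι : Type} (D : Set (ι → ZMod 2)) (v : (ι → ZMod 2) → Bool) : ℕ :=
  (D ∩ {s | v s = true}).ncard

/-- `ŵ(m'_Y) = Σ_{x ∈ Y} (2^{|I|}/|Y|)·m'(x)`, the normalized mass that the
distribution `m'` gives to `Y`. -/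
noncomputable def wHat {ι : Type} [Fintype ι] (m' : (ι → ZMod 2) → ℝ)
    (Y : Set (ι → ZMod 2)) : ℝ :=
  ((2 : ℝ) ^ Fintype.card ι / (Y.ncard : ℝ)) * ∑ᶠ x ∈ Y, m' x

/-- The function `s̄` of the paper: `s̄(k)` is the largest `l` with
`(k/(l+1))·ϵ²·ε^l > 4` when `k·ϵ² > 4`, and `0` otherwise. -/
noncomputable def sbar (ε ϵ : ℝ) (k : ℕ) : ℕ :=
  if 4 < (k : ℝ) * ϵ ^ 2 then
    sSup {l : ℕ | 4 < (k : ℝ) / ((l : ℝ) + 1) * ϵ ^ 2 * ε ^ l}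
  else 0

section Csec

variable {ι : Type} {C D D' : Set (ι → ZMod 2)} {v v' : (ι → ZMod 2) → Bool}

lemma mem_csec {x : ι → ZMod 2} :
    x ∈ csec C D v ↔ ∀ s ∈ D, (x ∈ C + {s} ↔ v s = false) := by
  simp only [csec, mem_iInter]
  refine forall₂_congr fun s _ => ?_
  cases v s <;> simp

lemma csec_congr (h : ∀ s ∈ D, v s = v' s) : csec C D v = csec C D v' := by
  ext x
  simp only [mem_csec]
  exact forall₂_congr fun s hs => by rw [h s hs]

lemma disjoint_csec {s : ι → ZMod 2} (hs : s ∈ D) (hne : v s ≠ v' s) :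
    Disjoint (csec C D v) (csec C D v') := by
  refine Set.disjoint_left.2 fun x hx hx' => hne ?_
  have h := (mem_csec.1 hx s hs).symm.trans (mem_csec.1 hx' s hs)
  cases hv : v s <;> cases hv' : v' s <;> simp_all

def refinements (D D' : Set (ι → ZMod 2)) (v : (ι → ZMod 2) → Bool) :
    Set ((ι → ZMod 2) → Bool) :=
  {q | ∀ s ∉ D' \ D, q s = v s}

lemma csec_eq_biUnion_refinements (hDD' : D ⊆ D') :
    csec C D v = ⋃ q ∈ refinements D D' v, csec C D' q := by
  ext x
  simp only [mem_iUnion, refinements, Set.mem_ofPred_eq, exists_prop, mem_csec]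
  constructor
  · intro hx
    classical
    refine ⟨fun s => if s ∈ D' \ D then decide (x ∉ C + {s}) else v s,
      fun s hs => if_neg hs, fun s hs => ?_⟩
    by_cases hsD : s ∈ D
    · simpa [hsD] using hx s hsD
    · simp [hs, hsD]
  · rintro ⟨q, hq, hx⟩ s hs
    rw [← hq s fun h => h.2 hs]
    exact hx s (hDD' hs)

lemma pairwiseDisjoint_csec_refinements :
    (refinements D D' v).PairwiseDisjoint (csec C D') := by
  intro q hq q' hq' hne
  obtain ⟨s, hs⟩ := Function.ne_iff.1 hne
  have hsD : s ∈ D' \ D := by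
    by_contra h
    exact hs ((hq s h).trans (hq' s h).symm)
  exact disjoint_csec hsD.1 hs

end Csec

section WHat

variable {ι : Type} [Fintype ι] {m' : (ι → ZMod 2) → ℝ}

lemma wHat_mul_ncard (m' : (ι → ZMod 2) → ℝ) (Y : Set (ι → ZMod 2)) :
    wHat m' Y * Y.ncard = 2 ^ Fintype.card ι * ∑ᶠ x ∈ Y, m' x := by
  rcases Y.eq_empty_or_nonempty with rfl | hY
  · simp
  · have : (Y.ncard : ℝ) ≠ 0 := by exact_mod_cast (Set.ncard_pos (Set.toFinite Y)).2 hY |>.ne'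
    rw [wHat]
    field_simp

lemma wHat_nonneg (hm' : ∀ x, 0 ≤ m' x) (Y : Set (ι → ZMod 2)) : 0 ≤ wHat m' Y :=
  mul_nonneg (by positivity) (finsum_nonneg fun x => finsum_nonneg fun _ => hm' x)

lemma wHat_le_one (hm' : ∀ x, m' x ≤ 1 / 2 ^ Fintype.card ι) (Y : Set (ι → ZMod 2)) :
    wHat m' Y ≤ 1 := by
  have hmass : ∑ᶠ x ∈ Y, m' x ≤ Y.ncard / 2 ^ Fintype.card ι := by
    rw [finsum_mem_eq_finite_toFinset_sum _ (Set.toFinite Y),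
      Set.ncard_eq_toFinset_card Y (Set.toFinite Y), div_eq_mul_one_div, ← nsmul_eq_mul]
    exact Finset.sum_le_card_nsmul _ _ _ fun x _ => hm' x
  calc wHat m' Y ≤ 2 ^ Fintype.card ι / Y.ncard * (Y.ncard / 2 ^ Fintype.card ι) :=
        mul_le_mul_of_nonneg_left hmass (by positivity)
    _ ≤ 1 := by
        rcases eq_or_ne (Y.ncard : ℝ) 0 with h | h
        · simp [h]
        · rw [div_mul_div_comm, mul_comm, div_self (by positivity)]

end WHat

lemma Finset.exists_gt_of_sum_mul_eq {α : Type*} {A : Finset α} {N w : α → ℝ} {W ϵ η : ℝ}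
    {g : α} (hg : g ∈ A) (hN : ∀ q ∈ A, 0 ≤ N q) (hNg : 0 < N g) (hW : 0 ≤ W) (hη : 0 ≤ η)
    (havg : ∑ q ∈ A, w q * N q = W * ∑ q ∈ A, N q) (hwg : w g < (1 - ϵ) * W)
    (hshare : η * ∑ q ∈ A, N q ≤ ϵ * N g) :
    ∃ q ∈ A, (1 + η) * W < w q := by
  classical
  by_contra! hle
  have hrest : ∑ q ∈ A.erase g, w q * N q ≤ (1 + η) * W * ∑ q ∈ A.erase g, N q := by
    rw [Finset.mul_sum]
    exact Finset.sum_le_sum fun q hq => mul_le_mul_of_nonneg_right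
      (hle q (Finset.mem_of_mem_erase hq)) (hN q (Finset.mem_of_mem_erase hq))
  rw [← Finset.add_sum_erase A _ hg, ← Finset.add_sum_erase A N hg] at havg
  rw [← Finset.add_sum_erase A N hg] at hshare
  have hg' : w g * N g < (1 - ϵ) * W * N g := mul_lt_mul_of_pos_right hwg hNg
  nlinarith [mul_nonneg (mul_nonneg hW hη) hNg.le, mul_le_mul_of_nonneg_left hshare hW]

/-- The density `(1 - ε) ^ m⁰_f * ε ^ m¹_f` that `(C)^f` would have if `C` were a random set
of density `1 - ε`. -/
noncomputable def expectedDensity {ι : Type} (ε : ℝ) (D : Set (ι → ZMod 2))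
    (v : (ι → ZMod 2) → Bool) : ℝ :=
  (1 - ε) ^ m0 D v * ε ^ m1 D v

def IsPseudorandom {ι : Type} [Fintype ι] (C : Set (ι → ZMod 2)) (m : ℕ) (ε δ : ℝ) : Prop :=
  ∀ (D : Set (ι → ZMod 2)) (v : (ι → ZMod 2) → Bool), D.ncard ≤ m →
    |((csec C D v).ncard : ℝ) / 2 ^ Fintype.card ι - expectedDensity ε D v| < δ

def Extends {α : Type*} (D : Set α) (v : α → Bool) (D' : Set α) (v' : α → Bool) : Prop :=
  D ⊆ D' ∧ ∀ x ∈ D, v' x = v x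

lemma Extends.refl {α : Type*} (D : Set α) (v : α → Bool) : Extends D v D v :=
  ⟨subset_rfl, fun _ _ => rfl⟩

lemma Extends.trans {α : Type*} {D D' D'' : Set α} {v v' v'' : α → Bool}
    (h : Extends D v D' v') (h' : Extends D' v' D'' v'') : Extends D v D'' v'' :=
  ⟨h.1.trans h'.1, fun x hx => (h'.2 x (h.1 hx)).trans (h.2 x hx)⟩

lemma ncard_sdiff_le_ncard_sdiff_add {α : Type*} [Finite α] (D D' D'' : Set α) :
    (D'' \ D).ncard ≤ (D'' \ D').ncard + (D' \ D).ncard :=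
  (Set.ncard_le_ncard (sdiff_triangle D'' D' D)).trans (Set.ncard_union_le _ _)

section ExpectedDensity

variable {ι : Type} {ε : ℝ} {D E : Set (ι → ZMod 2)} {v v' : (ι → ZMod 2) → Bool}

lemma m0_add_m1 [Finite ι] (D : Set (ι → ZMod 2)) (v : (ι → ZMod 2) → Bool) :
    m0 D v + m1 D v = D.ncard := by
  rw [m0, m1, ← Set.ncard_union_eq (Set.disjoint_left.2 fun x h0 h1 => by simp_all)]
  congr 1
  ext x
  cases h : v x <;> simp [h]

lemma expectedDensity_union [Finite ι] (v : (ι → ZMod 2) → Bool) (h : Disjoint D E) :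
    expectedDensity ε (D ∪ E) v = expectedDensity ε D v * expectedDensity ε E v := by
  have hunion (S : Set (ι → ZMod 2)) : ((D ∪ E) ∩ S).ncard = (D ∩ S).ncard + (E ∩ S).ncard := by
    rw [Set.union_inter_distrib_right,
      Set.ncard_union_eq (h.mono Set.inter_subset_left Set.inter_subset_left)]
  simp only [expectedDensity, m0, m1, hunion, pow_add]
  ring

lemma expectedDensity_congr (h : ∀ s ∈ D, v s = v' s) :
    expectedDensity ε D v = expectedDensity ε D v' := by
  have hS (b : Bool) : D ∩ {s | v s = b} = D ∩ {s | v' s = b} := by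
    ext s
    exact and_congr_right fun hs => by rw [Set.mem_ofPred_eq, Set.mem_ofPred_eq, h s hs]
  simp only [expectedDensity, m0, m1, hS]

lemma expectedDensity_pos (hε0 : 0 < ε) (hε1 : ε < 1) : 0 < expectedDensity ε D v :=
  mul_pos (pow_pos (by linarith) _) (pow_pos hε0 _)

lemma pow_ncard_le_expectedDensity [Finite ι] (hε0 : 0 ≤ ε) (hε2 : ε ≤ 1 / 2) (D : Set (ι → ZMod 2))
    (v : (ι → ZMod 2) → Bool) : ε ^ D.ncard ≤ expectedDensity ε D v := by
  rw [← m0_add_m1 D v, pow_add, expectedDensity]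
  exact mul_le_mul_of_nonneg_right (pow_le_pow_left₀ hε0 (by linarith) _) (by positivity)

end ExpectedDensity

namespace IsPseudorandom

variable {ι : Type} [Fintype ι] {C : Set (ι → ZMod 2)} {m : ℕ} {ε δ : ℝ}
  {D D' : Set (ι → ZMod 2)} {v v' : (ι → ZMod 2) → Bool}

lemma ncard_csec_div_bounds (hC : IsPseudorandom C m ε δ) (hε0 : 0 ≤ ε) (hε2 : ε ≤ 1 / 2)
    (hδ : δ ≤ ε ^ m / 2) (hD : D.ncard ≤ m) :
    expectedDensity ε D v / 2 < (csec C D v).ncard / 2 ^ Fintype.card ι ∧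
      (csec C D v).ncard / 2 ^ Fintype.card ι < 3 / 2 * expectedDensity ε D v := by
  have hδD : δ ≤ expectedDensity ε D v / 2 := by
    have := pow_le_pow_of_le_one hε0 (by linarith) hD
    have := pow_ncard_le_expectedDensity hε0 hε2 D v
    linarith
  have := abs_sub_lt_iff.1 (hC D v hD)
  constructor <;> linarith

lemma pow_mul_ncard_csec_lt (hC : IsPseudorandom C m ε δ) (hε0 : 0 < ε) (hε2 : ε ≤ 1 / 2)
    (hδ : δ ≤ ε ^ m / 2) (hext : Extends D v D' v') (hD' : D'.ncard ≤ m) {s : ℕ}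
    (hs : (D' \ D).ncard ≤ s) :
    ε ^ s * (csec C D v).ncard < 3 * (csec C D' v').ncard := by
  have hdens : expectedDensity ε D v * ε ^ s ≤ expectedDensity ε D' v' := by
    rw [← Set.union_sdiff_cancel hext.1, expectedDensity_union v' Set.disjoint_sdiff_right,
      expectedDensity_congr hext.2]
    refine mul_le_mul_of_nonneg_left ?_ (expectedDensity_pos hε0 (by linarith)).le
    exact (pow_le_pow_of_le_one hε0.le (by linarith) hs).trans
      (pow_ncard_le_expectedDensity hε0.le hε2 _ _)
  have hD := hC.ncard_csec_div_bounds (v := v) hε0.le hε2 hδ ((Set.ncard_le_ncard hext.1).trans hD')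
  have hD'' := hC.ncard_csec_div_bounds (v := v') hε0.le hε2 hδ hD'
  have hR : (0 : ℝ) < 2 ^ Fintype.card ι := by positivity
  have hεs : 0 < ε ^ s := pow_pos hε0 s
  have : ε ^ s * ((csec C D v).ncard / 2 ^ Fintype.card ι)
      < 3 * ((csec C D' v').ncard / 2 ^ Fintype.card ι) := by
    nlinarith [mul_lt_mul_of_pos_left hD.2 hεs]
  rwa [← mul_div_assoc, ← mul_div_assoc, div_lt_div_iff_of_pos_right hR] at this

lemma exists_wHat_gt_of_wHat_lt (hC : IsPseudorandom C m ε δ) (hε0 : 0 < ε)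
    (hε2 : ε ≤ 1 / 2) (hδ : δ ≤ ε ^ m / 2) {m' : (ι → ZMod 2) → ℝ} (hm' : ∀ x, 0 ≤ m' x)
    {ϵ : ℝ} (hϵ : 0 ≤ ϵ) (hext : Extends D v D' v') (hD' : D'.ncard ≤ m) {s : ℕ}
    (hs : (D' \ D).ncard ≤ s)
    (hlt : wHat m' (csec C D' v') < (1 - ϵ) * wHat m' (csec C D v)) :
    ∃ v'', Extends D v D' v'' ∧
      (1 + ϵ * ε ^ s / 4) * wHat m' (csec C D v) < wHat m' (csec C D' v'') := by
  classical
  have hP : (refinements D D' v).Finite := Set.toFinite _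
  set A := hP.toFinset
  let g : (ι → ZMod 2) → Bool := fun t => if t ∈ D' \ D then v' t else v t
  have hgA : g ∈ A := hP.mem_toFinset.2 fun t ht => if_neg ht
  have hg : csec C D' g = csec C D' v' :=
    csec_congr fun t ht => by by_cases htD : t ∈ D <;> simp [g, htD, ht, hext.2]
  have hcover := csec_eq_biUnion_refinements (C := C) (v := v) hext.1
  have hdisj := pairwiseDisjoint_csec_refinements (C := C) (D := D) (D' := D') (v := v)
  have hN : ((csec C D v).ncard : ℝ) = ∑ q ∈ A, ((csec C D' q).ncard : ℝ) := by
    rw [hcover, hP.ncard_biUnion (fun _ _ => Set.toFinite _) hdisj,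
      finsum_mem_eq_finite_toFinset_sum _ hP]
    push_cast
    rfl
  have hμ : ∑ᶠ x ∈ csec C D v, m' x = ∑ q ∈ A, ∑ᶠ x ∈ csec C D' q, m' x := by
    rw [hcover, finsum_mem_biUnion hdisj hP (fun _ _ => Set.toFinite _),
      finsum_mem_eq_finite_toFinset_sum _ hP]
  have havg : ∑ q ∈ A, wHat m' (csec C D' q) * (csec C D' q).ncard
      = wHat m' (csec C D v) * ∑ q ∈ A, ((csec C D' q).ncard : ℝ) := by
    simp_rw [wHat_mul_ncard]
    rw [← Finset.mul_sum, ← hμ, ← hN, wHat_mul_ncard]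
  have hNg : (0 : ℝ) < (csec C D' g).ncard := by
    have := (hC.ncard_csec_div_bounds (v := g) hε0.le hε2 hδ hD').1
    have := expectedDensity_pos (D := D') (v := g) hε0 (by linarith)
    have hR : (0 : ℝ) < 2 ^ Fintype.card ι := by positivity
    exact (div_pos_iff_of_pos_right hR).1 (by linarith)
  have hshare : ϵ * ε ^ s / 4 * ∑ q ∈ A, ((csec C D' q).ncard : ℝ) ≤ ϵ * (csec C D' g).ncard := by
    have := hC.pow_mul_ncard_csec_lt hε0 hε2 hδ hext hD' hs
    rw [← hN, hg]
    nlinarith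
  obtain ⟨q, hqA, hq⟩ := Finset.exists_gt_of_sum_mul_eq (w := fun q => wHat m' (csec C D' q))
    (N := fun q => ((csec C D' q).ncard : ℝ)) hgA (fun q _ => Nat.cast_nonneg _) hNg
    (wHat_nonneg hm' _) (by positivity) havg (hg ▸ hlt) hshare
  exact ⟨q, ⟨hext.1, fun t ht => hP.mem_toFinset.1 hqA t fun h => h.2 ht⟩, hq⟩

end IsPseudorandom

section Sbar

variable {ε ϵ : ℝ} {k : ℕ}

lemma four_lt_of_sbar_pos (hε0 : 0 ≤ ε) (hε1 : ε ≤ 1) (hϵ1 : ϵ ^ 2 ≤ 1) (h : 0 < sbar ε ϵ k) :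
    4 < k / (sbar ε ϵ k + 1 : ℝ) * ϵ ^ 2 * ε ^ sbar ε ϵ k := by
  have hk : 4 < (k : ℝ) * ϵ ^ 2 := by
    by_contra hk
    simp [sbar, hk] at h
  rw [sbar, if_pos hk]
  refine Nat.sSup_mem (s := {l : ℕ | 4 < k / (l + 1 : ℝ) * ϵ ^ 2 * ε ^ l})
    ⟨0, by simpa using hk⟩ ⟨k, fun l (hl : 4 < k / (l + 1 : ℝ) * ϵ ^ 2 * ε ^ l) => ?_⟩
  have : k / (l + 1 : ℝ) * ϵ ^ 2 * ε ^ l ≤ k / (l + 1 : ℝ) := by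
    rw [mul_assoc]
    exact mul_le_of_le_one_right (by positivity)
      (mul_le_one₀ hϵ1 (pow_nonneg hε0 l) (pow_le_one₀ hε0 hε1))
  have : (l + 1 : ℝ) < k := by
    rw [← one_lt_div (by positivity)]
    linarith
  exact_mod_cast (by linarith : (l : ℝ) ≤ k)

lemma sbar_mul_succ_le (hε0 : 0 ≤ ε) (hε2 : ε ≤ 1 / 2) (hϵ1 : ϵ ^ 2 ≤ 1)
    (h : 0 < sbar ε ϵ k) : (sbar ε ϵ k + 1) * sbar ε ϵ k ≤ k := by
  set s := sbar ε ϵ k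
  have h4 := four_lt_of_sbar_pos hε0 (by linarith) hϵ1 h
  have hpow : ε ^ s * 2 ^ s ≤ 1 := by
    rw [← mul_pow]
    exact pow_le_one₀ (by positivity) (by linarith)
  have hs : (s : ℝ) < 2 ^ s := by exact_mod_cast Nat.lt_two_pow_self
  rw [div_mul_eq_mul_div, div_mul_eq_mul_div, lt_div_iff₀ (by positivity)] at h4
  have : (s + 1 : ℝ) * s ≤ k := by
    nlinarith [mul_le_mul_of_nonneg_left hpow (Nat.cast_nonneg (α := ℝ) k),
      pow_nonneg hε0 s, sq_nonneg ϵ]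
  exact_mod_cast this

lemma exists_mul_sbar_le (hε0 : 0 ≤ ε) (hε2 : ε ≤ 1 / 2) (hϵ0 : 0 < ϵ) (hϵ1 : ϵ ≤ 1) (k : ℕ) :
    ∃ T : ℕ, T * sbar ε ϵ k ≤ k ∧ 4 < T * (ϵ ^ 2 * ε ^ sbar ε ϵ k) := by
  have hϵ2 : ϵ ^ 2 ≤ 1 := pow_le_one₀ hϵ0.le hϵ1
  rcases (sbar ε ϵ k).eq_zero_or_pos with h | h
  · obtain ⟨T, hT⟩ := exists_nat_gt (4 / ϵ ^ 2)
    refine ⟨T, by simp [h], ?_⟩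
    rwa [h, pow_zero, mul_one, ← div_lt_iff₀ (by positivity)]
  set s := sbar ε ϵ k
  refine ⟨k / s, Nat.div_mul_le_self k s, ?_⟩
  have hsucc : k ≤ k / s * (s + 1) := by
    have hq : s + 1 ≤ k / s := (Nat.le_div_iff_mul_le h).2 (sbar_mul_succ_le hε0 hε2 hϵ2 h)
    have := Nat.div_add_mod k s
    have := Nat.mod_lt k h
    nlinarith
  have : (k : ℝ) / (s + 1) ≤ (k / s : ℕ) := by
    rw [div_le_iff₀ (by positivity)]
    exact_mod_cast hsucc
  have h4 := four_lt_of_sbar_pos hε0 (by linarith) hϵ2 h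
  nlinarith [pow_nonneg hε0 s, sq_nonneg ϵ, mul_nonneg (sq_nonneg ϵ) (pow_nonneg hε0 s)]

end Sbar

lemma exists_extends_mul_pow_le {α : Type*} [Finite α] (W : Set α → (α → Bool) → ℝ) {c : ℝ}
    (hc : 1 ≤ c) {D₀ : Set α} {v₀ : α → Bool} (hW₀ : 0 ≤ W D₀ v₀) {s k : ℕ}
    (hstep : ∀ D v, Extends D₀ v₀ D v → (D \ D₀).ncard + s ≤ k → W D₀ v₀ ≤ W D v →
      ∃ D' v', Extends D v D' v' ∧ (D' \ D).ncard ≤ s ∧ c * W D v ≤ W D' v')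
    (t : ℕ) (ht : t * s ≤ k) :
    ∃ D v, Extends D₀ v₀ D v ∧ (D \ D₀).ncard ≤ t * s ∧ W D₀ v₀ * c ^ t ≤ W D v := by
  induction t with
  | zero => exact ⟨D₀, v₀, Extends.refl D₀ v₀, by simp, by simp⟩
  | succ t ih =>
    rw [Nat.succ_mul] at ht ⊢
    obtain ⟨D, v, hext, hcard, hW⟩ := ih (by omega)
    have hW₀D : W D₀ v₀ ≤ W D v := (le_mul_of_one_le_right hW₀ (one_le_pow₀ hc)).trans hW
    obtain ⟨D', v', hext', hcard', hW'⟩ := hstep D v hext (by omega) hW₀D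
    refine ⟨D', v', hext.trans hext', ?_, ?_⟩
    · have := ncard_sdiff_le_ncard_sdiff_add D₀ D D'
      omega
    · calc W D₀ v₀ * c ^ (t + 1) = W D₀ v₀ * c ^ t * c := by ring
        _ ≤ W D v * c := mul_le_mul_of_nonneg_right hW (by linarith)
        _ ≤ W D' v' := by linarith

theorem exists_extension_wHat_ge_general
    (ι : Type) [Fintype ι] (m : ℕ) (ε ϵ δ : ℝ)
    (hε0 : 0 < ε) (hε2 : ε < 1 / 2) (hϵ0 : 0 < ϵ)
    (hδ : δ ≤ ε ^ m / 2)
    (C : Set (ι → ZMod 2))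
    (hC : ∀ (D : Set (ι → ZMod 2)) (v : (ι → ZMod 2) → Bool), D.ncard ≤ m →
      |((csec C D v).ncard : ℝ) / 2 ^ Fintype.card ι
        - (1 - ε) ^ m0 D v * ε ^ m1 D v| < δ)
    (kup k0 : ℕ) (hk : kup + k0 ≤ m)
    (Df : Set (ι → ZMod 2)) (vf : (ι → ZMod 2) → Bool) (hDf : Df.ncard ≤ kup)
    (m' : (ι → ZMod 2) → ℝ)
    (hm' : ∀ x, 0 ≤ m' x ∧ m' x ≤ 1 / 2 ^ Fintype.card ι)
    (hbig : ϵ ≤ wHat m' (csec C Df vf)) :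
    ∃ (Dt : Set (ι → ZMod 2)) (vt : (ι → ZMod 2) → Bool),
      Df ⊆ Dt ∧ (∀ s ∈ Df, vt s = vf s) ∧
      (Dt \ Df).ncard ≤ k0 - sbar ε ϵ k0 ∧
      ∀ (Dg : Set (ι → ZMod 2)) (vg : (ι → ZMod 2) → Bool),
        Dt ⊆ Dg → (∀ s ∈ Dt, vg s = vt s) → (Dg \ Dt).ncard ≤ sbar ε ϵ k0 →
        wHat m' (csec C Df vf) * (1 - ϵ) ≤ wHat m' (csec C Dg vg) := by
  have hϵ1 : ϵ ≤ 1 := hbig.trans (wHat_le_one (fun x => (hm' x).2) _)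
  set s := sbar ε ϵ k0
  set wf := wHat m' (csec C Df vf)
  have hη : 0 ≤ ϵ * ε ^ s / 4 := by positivity
  obtain ⟨T, hTs, hT⟩ := exists_mul_sbar_le hε0.le hε2.le hϵ0 hϵ1 k0
  by_contra! hbad
  have hstep (D v) (hext : Extends Df vf D v) (hcard : (D \ Df).ncard + s ≤ k0)
      (hwf : wf ≤ wHat m' (csec C D v)) : ∃ D' v', Extends D v D' v' ∧ (D' \ D).ncard ≤ s ∧
        (1 + ϵ * ε ^ s / 4) * wHat m' (csec C D v) ≤ wHat m' (csec C D' v') := by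
    obtain ⟨D', v', hD', hv', hcard', hlt⟩ := hbad D v hext.1 hext.2 (by omega)
    have hD'm : D'.ncard ≤ m := by
      have := Set.ncard_le_ncard_sdiff_add_ncard D' Df
      have := ncard_sdiff_le_ncard_sdiff_add Df D D'
      omega
    obtain ⟨v'', hext', hgt⟩ := IsPseudorandom.exists_wHat_gt_of_wHat_lt hC hε0 hε2.le hδ
      (fun x => (hm' x).1) hϵ0.le ⟨hD', hv'⟩ hD'm hcard' (by nlinarith)
    exact ⟨D', v'', hext', hcard', hgt.le⟩
  obtain ⟨D, v, -, -, hgrow⟩ := exists_extends_mul_pow_le (fun D v => wHat m' (csec C D v))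
    (by linarith) (hϵ0.le.trans hbig) hstep T hTs
  have hBernoulli := one_add_mul_le_pow (a := ϵ * ε ^ s / 4) (by linarith) T
  have := wHat_le_one (fun x => (hm' x).2) (csec C D v)
  nlinarith [mul_le_mul hbig hBernoulli (by positivity) (hϵ0.le.trans hbig)]

/-- Lemma 5.9 ("small") of the paper. -/
theorem exists_extension_wHat_ge
    (ι : Type) [Fintype ι] (m : ℕ) (ε ϵ δ : ℝ)
    (hε0 : 0 < ε) (hε2 : ε < 1 / 2) (hϵ0 : 0 < ϵ) (hϵε : ϵ ≤ ε)
    (hδ0 : 0 < δ) (hδ : δ ≤ ε ^ m / 2)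
    (C : Set (ι → ZMod 2))
    (hC : ∀ (D : Set (ι → ZMod 2)) (v : (ι → ZMod 2) → Bool), D.ncard ≤ m →
      |((csec C D v).ncard : ℝ) / 2 ^ Fintype.card ι
        - (1 - ε) ^ m0 D v * ε ^ m1 D v| < δ)
    (kup k0 : ℕ) (hk : kup + k0 ≤ m)
    (Df : Set (ι → ZMod 2)) (vf : (ι → ZMod 2) → Bool) (hDf : Df.ncard ≤ kup)
    (m' : (ι → ZMod 2) → ℝ)
    (hm' : ∀ x, 0 ≤ m' x ∧ m' x ≤ 1 / 2 ^ Fintype.card ι)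
    (hbig : ϵ ≤ wHat m' (csec C Df vf)) :
    ∃ (Dt : Set (ι → ZMod 2)) (vt : (ι → ZMod 2) → Bool),
      Df ⊆ Dt ∧ (∀ s ∈ Df, vt s = vf s) ∧
      (Dt \ Df).ncard ≤ k0 - sbar ε ϵ k0 ∧
      ∀ (Dg : Set (ι → ZMod 2)) (vg : (ι → ZMod 2) → Bool),
        Dt ⊆ Dg → (∀ s ∈ Dt, vg s = vt s) → (Dg \ Dt).ncard ≤ sbar ε ϵ k0 →
        wHat m' (csec C Df vf) * (1 - ϵ) ≤ wHat m' (csec C Dg vg) :=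
  exists_extension_wHat_ge_general ι m ε ϵ δ hε0 hε2 hϵ0 hδ C hC kup k0 hk Df vf hDf m' hm' hbig
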